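/- arXiv:1909.03581 — 3 statements merged into one kernel-verified Lean document; each statement's English description precedes it below -/
import Mathlib

section
/- The map f ↦ U(f) is injective on L¹(ℝ^d; ℂ): if f, g ∈ L¹(ℝ^d; ℂ) satisfy U(f) = U(g) as operators on L²(ℝ^d; ℂ), then f = g almost everywhere. (This follows from the evaluation identity (U(f)ξ)(0) = ∫_{ℝ^d} f(t) ξ(−t) dt valid for all Schwartz functions ξ.) -/
open MeasureTheory Complex Filter

noncomputable section

/-- `ℝ^d` as Euclidean space. -/
abbrev Ed (d : ℕ) : Type := EuclideanSpace ℝ (Fin d)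

/-- The pairing `⟨t, θ r⟩` where `θ` acts as a matrix on `r`. -/
def pairing {d : ℕ} (θ : Matrix (Fin d) (Fin d) ℝ) (t r : Ed d) : ℝ :=
  ∑ i, t i * ∑ j, θ i j * r j

/-- The Weyl operator at `t`, acting on functions:
`(U(t)ξ)(r) = exp(−(i/2)⟨t, θr⟩) ξ(r − t)`. -/
def weyl {d : ℕ} (θ : Matrix (Fin d) (Fin d) ℝ) (t : Ed d) (ξ : Ed d → ℂ) : Ed d → ℂ :=
  fun r => Complex.exp (-(Complex.I / 2) * (pairing θ t r : ℂ)) * ξ (r - t)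

/-- The complex Hilbert space `L²(ℝ^d; ℂ)`. -/
abbrev L2 (d : ℕ) := Lp ℂ 2 (volume : Measure (Ed d))

/-!
For a continuous compactly supported `ξ`, the `L²`-valued integral `∫ h(t) U(t)ξ dt` is represented
by the continuous function `r ↦ ∫ h(t) (U(t)ξ)(r) dt` (compare both against test functions and use
Fubini), whose value at `r = 0` is `∫ h(t) ξ(-t) dt`. If `U(f) = U(g)`, taking `ξ(s) = φ(-s)` for
an arbitrary test function `φ` gives `∫ (f - g) φ = 0`, so `f = g` a.e.
The Bochner integral makes sense because `t ↦ U(t)ξ` is continuous: `‖U(t)ξ‖ = ‖ξ‖` and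
`⟪U(s)ξ, U(t)ξ⟫` is continuous in `t` by dominated convergence.
-/

open Topology
open scoped InnerProductSpace ComplexConjugate

section Weyl

variable {d : ℕ} (θ : Matrix (Fin d) (Fin d) ℝ)

theorem continuous_pairing : Continuous fun p : Ed d × Ed d => pairing θ p.1 p.2 := by
  unfold pairing
  fun_prop

theorem norm_weyl_apply (t r : Ed d) (u : Ed d → ℂ) : ‖weyl θ t u r‖ = ‖u (r - t)‖ := by
  have h : -(I / 2) * (pairing θ t r : ℂ) = ((-(pairing θ t r / 2) : ℝ) : ℂ) * I := by
    push_cast; ring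
  rw [weyl, norm_mul, h, norm_exp_ofReal_mul_I, one_mul]

theorem weyl_apply_zero (t : Ed d) (u : Ed d → ℂ) : weyl θ t u 0 = u (-t) := by
  simp [weyl, pairing]

theorem Continuous.weyl_uncurry {u : Ed d → ℂ} (hu : Continuous u) :
    Continuous fun p : Ed d × Ed d => weyl θ p.1 u p.2 := by
  have := continuous_pairing θ
  unfold weyl
  fun_prop

theorem weyl_congr_ae (t : Ed d) {u v : Ed d → ℂ} (huv : u =ᵐ[volume] v) :
    weyl θ t u =ᵐ[volume] weyl θ t v := by
  filter_upwards [(measurePreserving_sub_right volume t).quasiMeasurePreserving.ae_eq_comp huv]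
    with r hr
  simp only [weyl, Function.comp_apply] at hr ⊢
  rw [hr]

theorem eLpNorm_weyl (p : ENNReal) (t : Ed d) {u : Ed d → ℂ}
    (hu : AEStronglyMeasurable u volume) :
    eLpNorm (weyl θ t u) p volume = eLpNorm u p volume := by
  rw [← eLpNorm_comp_measurePreserving hu (measurePreserving_sub_right volume t)]
  exact eLpNorm_congr_norm_ae (.of_forall fun r => norm_weyl_apply θ t r u)

end Weyl

theorem tendsto_of_norm_eq_of_tendsto_inner {𝕜 E α : Type*} [RCLike 𝕜] [NormedAddCommGroup E]
    [InnerProductSpace 𝕜 E] {l : Filter α} {x : α → E} {y : E} (hnorm : ∀ a, ‖x a‖ = ‖y‖)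
    (hinner : Tendsto (fun a => ⟪y, x a⟫_𝕜) l (𝓝 ⟪y, y⟫_𝕜)) : Tendsto x l (𝓝 y) := by
  have hsq : ∀ a, ‖x a - y‖ ^ 2 = 2 * (‖y‖ ^ 2 - RCLike.re ⟪y, x a⟫_𝕜) := fun a => by
    rw [norm_sub_sq (𝕜 := 𝕜), inner_re_symm, hnorm]
    ring
  have hlim : Tendsto (fun a => ‖x a - y‖ ^ 2) l (𝓝 0) := by
    have := ((RCLike.continuous_re.tendsto _).comp hinner).const_sub (‖y‖ ^ 2) |>.const_mul 2
    rwa [Function.comp_def, ← funext hsq, inner_self_eq_norm_sq, sub_self, mul_zero] at this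
  rw [tendsto_iff_norm_sub_tendsto_zero]
  simpa using hlim.sqrt

theorem L2.inner_eq_integral_of_ae_eq {α : Type*} [MeasurableSpace α] {μ : Measure α}
    {X Y : Lp ℂ 2 μ} {a b : α → ℂ} (ha : ⇑X =ᵐ[μ] a) (hb : ⇑Y =ᵐ[μ] b) :
    ⟪X, Y⟫_ℂ = ∫ r, conj (a r) * b r ∂μ := by
  rw [L2.inner_def]
  refine integral_congr_ae ?_
  filter_upwards [ha, hb] with r har hbr
  rw [har, hbr, RCLike.inner_apply, mul_comm]

section WeylIntegral

variable {d : ℕ} (θ : Matrix (Fin d) (Fin d) ℝ)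

def weylIntegral (h u : Ed d → ℂ) (r : Ed d) : ℂ := ∫ t, h t * weyl θ t u r

variable {h u : Ed d → ℂ}

theorem weylIntegral_zero : weylIntegral θ h u 0 = ∫ t, h t * u (-t) := by
  simp only [weylIntegral, weyl_apply_zero]

theorem continuous_weylIntegral (hh : Integrable h volume) (hu : Continuous u)
    (hus : HasCompactSupport u) : Continuous (weylIntegral θ h u) := by
  obtain ⟨C, hC⟩ := hus.exists_bound_of_continuous hu
  have hw := hu.weyl_uncurry θ
  refine continuous_of_dominated (bound := fun t => ‖h t‖ * C) (fun r => ?_)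
    (fun r => .of_forall fun t => ?_) (hh.norm.mul_const C) (.of_forall fun t => by fun_prop)
  · exact hh.aestronglyMeasurable.mul
      (by fun_prop : Continuous fun t => weyl θ t u r).aestronglyMeasurable
  · rw [norm_mul, norm_weyl_apply]
    exact mul_le_mul_of_nonneg_left (hC _) (norm_nonneg _)

theorem integrable_prod_mul_weyl {ψ : Ed d → ℂ} (hh : Integrable h volume)
    (hψ : Continuous ψ) (hψs : HasCompactSupport ψ) (hu : Continuous u)
    (hus : HasCompactSupport u) :
    Integrable (fun z : Ed d × Ed d => h z.1 * (ψ z.2 * weyl θ z.1 u z.2))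
      (volume.prod volume) := by
  obtain ⟨C, hC⟩ := hus.exists_bound_of_continuous hu
  have hw := hu.weyl_uncurry θ
  refine (hh.norm.mul_prod ((hψ.integrable_of_hasCompactSupport hψs).norm.mul_const C)).mono'
    ((hh.aestronglyMeasurable.comp_quasiMeasurePreserving Measure.quasiMeasurePreserving_fst).mul
      (by fun_prop : Continuous fun z : Ed d × Ed d => ψ z.2 * weyl θ z.1 u z.2
        ).aestronglyMeasurable)
    (.of_forall fun z => ?_)
  rw [norm_mul, norm_mul, norm_weyl_apply]
  gcongr
  exact hC _

theorem continuous_integral_conj_weyl_mul_weyl (hu : Continuous u)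
    (hus : HasCompactSupport u) (s : Ed d) :
    Continuous fun t => ∫ r, conj (weyl θ s u r) * weyl θ t u r := by
  obtain ⟨C, hC⟩ := hus.exists_bound_of_continuous hu
  have hw := hu.weyl_uncurry θ
  refine continuous_of_dominated (bound := fun r => ‖u (r - s)‖ * C) (fun t => ?_)
    (fun t => .of_forall fun r => ?_) ?_ (.of_forall fun r => by fun_prop)
  · exact (by fun_prop :
      Continuous fun r => conj (weyl θ s u r) * weyl θ t u r).aestronglyMeasurable
  · rw [norm_mul, RCLike.norm_conj, norm_weyl_apply, norm_weyl_apply]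
    exact mul_le_mul_of_nonneg_left (hC _) (norm_nonneg _)
  · exact (((measurePreserving_sub_right volume s).integrable_comp hu.aestronglyMeasurable).mpr
      (hu.integrable_of_hasCompactSupport hus)).norm.mul_const C

end WeylIntegral

section WeylOperator

variable {d : ℕ} (θ : Matrix (Fin d) (Fin d) ℝ) {Uop : Ed d → L2 d →L[ℂ] L2 d}

theorem norm_weylOp_apply (hU : ∀ (t : Ed d) (ξ : L2 d), ⇑(Uop t ξ) =ᵐ[volume] weyl θ t ⇑ξ)
    (t : Ed d) (ξ : L2 d) : ‖Uop t ξ‖ = ‖ξ‖ := by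
  rw [Lp.norm_def, Lp.norm_def, eLpNorm_congr_ae (hU t ξ),
    eLpNorm_weyl θ 2 t (Lp.aestronglyMeasurable ξ)]

theorem weylOp_apply_ae_eq (hU : ∀ (t : Ed d) (ξ : L2 d), ⇑(Uop t ξ) =ᵐ[volume] weyl θ t ⇑ξ)
    {ξ : L2 d} {u : Ed d → ℂ} (hξ : ⇑ξ =ᵐ[volume] u) (t : Ed d) :
    ⇑(Uop t ξ) =ᵐ[volume] weyl θ t u :=
  (hU t ξ).trans (weyl_congr_ae θ t hξ)

theorem continuous_weylOp_apply
    (hU : ∀ (t : Ed d) (ξ : L2 d), ⇑(Uop t ξ) =ᵐ[volume] weyl θ t ⇑ξ)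
    {u : Ed d → ℂ} (hu : Continuous u) (hus : HasCompactSupport u) {ξ : L2 d}
    (hξ : ⇑ξ =ᵐ[volume] u) : Continuous fun t => Uop t ξ := by
  have hinner : ∀ s t, ⟪Uop s ξ, Uop t ξ⟫_ℂ = ∫ r, conj (weyl θ s u r) * weyl θ t u r :=
    fun s t => L2.inner_eq_integral_of_ae_eq (weylOp_apply_ae_eq θ hU hξ s)
      (weylOp_apply_ae_eq θ hU hξ t)
  refine continuous_iff_continuousAt.mpr fun s => tendsto_of_norm_eq_of_tendsto_inner (𝕜 := ℂ)
    (fun t => by rw [norm_weylOp_apply θ hU, norm_weylOp_apply θ hU]) ?_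
  simp only [hinner]
  exact (continuous_integral_conj_weyl_mul_weyl θ hu hus s).continuousAt

theorem integrable_smul_weylOp_apply
    (hU : ∀ (t : Ed d) (ξ : L2 d), ⇑(Uop t ξ) =ᵐ[volume] weyl θ t ⇑ξ)
    {h : Ed d → ℂ} (hh : Integrable h volume) {ξ : L2 d} (hξ : Continuous fun t => Uop t ξ) :
    Integrable (fun t => h t • Uop t ξ) volume :=
  (hh.norm.mul_const ‖ξ‖).mono' (hh.aestronglyMeasurable.smul hξ.aestronglyMeasurable)
    (.of_forall fun t => by rw [norm_smul, norm_weylOp_apply θ hU])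

theorem integral_smul_weylOp_apply_ae_eq
    (hU : ∀ (t : Ed d) (ξ : L2 d), ⇑(Uop t ξ) =ᵐ[volume] weyl θ t ⇑ξ)
    {h u : Ed d → ℂ} (hh : Integrable h volume) (hu : Continuous u) (hus : HasCompactSupport u)
    {ξ : L2 d} (hξ : ⇑ξ =ᵐ[volume] u) :
    ⇑(∫ t, h t • Uop t ξ) =ᵐ[volume] weylIntegral θ h u := by
  have hint := integrable_smul_weylOp_apply θ hU hh (continuous_weylOp_apply θ hU hu hus hξ)
  refine ae_eq_of_integral_contDiff_smul_eq ((Lp.memLp _).locallyIntegrable one_le_two)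
    (continuous_weylIntegral θ hh hu hus).locallyIntegrable fun ψ hψ hψs => ?_
  let ψc : Ed d → ℂ := fun r => (ψ r : ℂ)
  have hψc : Continuous ψc := by fun_prop
  have hψcs : HasCompactSupport ψc := hψs.comp_left ofReal_zero
  let η : L2 d := (hψc.memLp_of_hasCompactSupport hψcs).toLp ψc
  have hη : ⇑η =ᵐ[volume] ψc := MemLp.coeFn_toLp _
  calc ∫ r, ψ r • (∫ t, h t • Uop t ξ : L2 d) r
      = ⟪η, ∫ t, h t • Uop t ξ⟫_ℂ := by
        simp [L2.inner_eq_integral_of_ae_eq hη .rfl, ψc, real_smul]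
    _ = ∫ t, h t * ⟪η, Uop t ξ⟫_ℂ := by
        simp [← integral_inner hint, inner_smul_right]
    _ = ∫ t, ∫ r, h t * (ψc r * weyl θ t u r) := by
        congr with t
        simp [L2.inner_eq_integral_of_ae_eq hη (weylOp_apply_ae_eq θ hU hξ t),
          ← integral_const_mul, ψc]
    _ = ∫ r, ∫ t, h t * (ψc r * weyl θ t u r) :=
        integral_integral_swap (integrable_prod_mul_weyl θ hh hψc hψcs hu hus)
    _ = ∫ r, ψ r • weylIntegral θ h u r := by
        congr with r
        rw [weylIntegral, real_smul, ← integral_const_mul]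
        congr with t
        ring

end WeylOperator

theorem statement4_general (d : ℕ) (θ : Matrix (Fin d) (Fin d) ℝ)
    (Uop : Ed d → (L2 d →L[ℂ] L2 d))
    (hU : ∀ (t : Ed d) (ξ : L2 d), ⇑(Uop t ξ) =ᵐ[volume] weyl θ t ⇑ξ)
    (f g : Ed d → ℂ) (hf : Integrable f volume) (hg : Integrable g volume)
    (Ufop Ugop : L2 d →L[ℂ] L2 d)
    (hUf : ∀ ξ : L2 d, Ufop ξ = ∫ t : Ed d, f t • Uop t ξ ∂volume)
    (hUg : ∀ ξ : L2 d, Ugop ξ = ∫ t : Ed d, g t • Uop t ξ ∂volume)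
    (heq : Ufop = Ugop) :
    f =ᵐ[volume] g := by
  have hfg : Integrable (f - g) volume := hf.sub hg
  suffices ∀ᵐ t, (f - g) t = 0 by filter_upwards [this] with t ht using sub_eq_zero.mp ht
  refine ae_eq_zero_of_integral_contDiff_smul_eq_zero hfg.locallyIntegrable fun φ hφ hφs => ?_
  let u : Ed d → ℂ := fun s => (φ (-s) : ℂ)
  have hu : Continuous u := by fun_prop
  have hus : HasCompactSupport u :=
    (hφs.comp_left ofReal_zero).comp_isClosedEmbedding (Homeomorph.neg (Ed d)).isClosedEmbedding
  let ξ : L2 d := (hu.memLp_of_hasCompactSupport hus).toLp u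
  have hξ : ⇑ξ =ᵐ[volume] u := MemLp.coeFn_toLp _
  have hcont := continuous_weylOp_apply θ hU hu hus hξ
  have hzero : ∫ t, (f - g) t • Uop t ξ = 0 := by
    simp only [Pi.sub_apply, sub_smul]
    rw [integral_sub (integrable_smul_weylOp_apply θ hU hf hcont)
      (integrable_smul_weylOp_apply θ hU hg hcont), ← hUf, ← hUg, heq, sub_self]
  have hG : weylIntegral θ (f - g) u = 0 :=
    (continuous_weylIntegral θ hfg hu hus).ae_eq_iff_eq volume continuous_const |>.mp <|
      (integral_smul_weylOp_apply_ae_eq θ hU hfg hu hus hξ).symm.trans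
        (hzero ▸ Lp.coeFn_zero _ _ _)
  simpa [weylIntegral_zero, u, real_smul, mul_comm] using congr_fun hG 0

/-- The map `f ↦ U(f)` is injective on `L¹(ℝ^d; ℂ)`: if `U(f) = U(g)` as bounded operators on
`L²(ℝ^d; ℂ)`, then `f = g` almost everywhere. -/
theorem statement4 (d : ℕ) (hd : 0 < d) (θ : Matrix (Fin d) (Fin d) ℝ)
    (hθ : θ.transpose = -θ)
    (Uop : Ed d → (L2 d →L[ℂ] L2 d))
    (hU : ∀ (t : Ed d) (ξ : L2 d), ⇑(Uop t ξ) =ᵐ[volume] weyl θ t ⇑ξ)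
    (f g : Ed d → ℂ) (hf : Integrable f volume) (hg : Integrable g volume)
    (Ufop Ugop : L2 d →L[ℂ] L2 d)
    (hUf : ∀ ξ : L2 d, Ufop ξ = ∫ t : Ed d, f t • Uop t ξ ∂volume)
    (hUg : ∀ ξ : L2 d, Ugop ξ = ∫ t : Ed d, g t • Uop t ξ ∂volume)
    (heq : Ufop = Ugop) :
    f =ᵐ[volume] g :=
  statement4_general d θ Uop hU f g hf hg Ufop Ugop hUf hUg heq
end
end

section
/- The Schwartz space is closed under θ-twisted convolution: if f, g ∈ S(ℝ^d; ℂ) are Schwartz functions, then f *_θ g is again a Schwartz function on ℝ^d. -/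
open MeasureTheory Complex Filter

noncomputable section

/-- The θ-twisted convolution: `(f *_θ g)(s) = ∫ exp((i/2)⟨s, θt⟩) f(s − t) g(t) dt`. -/
def twistedConv {d : ℕ} (θ : Matrix (Fin d) (Fin d) ℝ) (f g : Ed d → ℂ) : Ed d → ℂ :=
  fun s => ∫ t : Ed d, Complex.exp ((Complex.I / 2) * (pairing θ s t : ℂ)) * (f (s - t) * g t) ∂volume

/-!
The integrand `K (s, t) = exp ((i/2) ⟨s, θ t⟩) f (s - t) g t` is a Schwartz function on
`ℝ^d × ℝ^d`: `f (s - t) g t` is the tensor product `f ⊗ g` composed with the linear shear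
`(s, t) ↦ (s - t, t)`, and the phase has temperate growth, being `x ↦ exp (i x)`, whose
derivatives are all bounded, composed with a bilinear form. Integrating out the second variable
of a Schwartz function on `E × F` against a measure of temperate growth yields a Schwartz function
on `E`: the `x`-derivative of the kernel is again Schwartz, so differentiation passes under the
integral, and the decay in `y` provides integrable bounds uniform in `x`.
-/

open scoped SchwartzMap ContDiff

theorem hasTemperateGrowth_cexp_ofReal_mul_I :
    Function.HasTemperateGrowth fun x : ℝ => cexp (x * I) := by
  have hderiv (n : ℕ) :
      iteratedDeriv n (fun x : ℝ => cexp (x * I)) = fun x : ℝ => I ^ n * cexp (x * I) := by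
    induction n with
    | zero => simp
    | succ n ih =>
      ext x
      rw [iteratedDeriv_succ, ih]
      exact (((hasDerivAt_id x).ofReal_comp.mul_const I).cexp.const_mul _).deriv.trans
        (by simp; ring)
  refine ⟨(ofRealCLM.contDiff.mul contDiff_const).cexp, fun n => ⟨0, 1, fun x => ?_⟩⟩
  rw [norm_iteratedFDeriv_eq_norm_iteratedDeriv, hderiv]
  simp [Complex.norm_exp]

theorem pairing_eq_inner {d : ℕ} (θ : Matrix (Fin d) (Fin d) ℝ) (s t : Ed d) :
    pairing θ s t = inner ℝ s (Matrix.toEuclideanCLM (𝕜 := ℝ) θ t) := by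
  simp [pairing, PiLp.inner_apply, Matrix.mulVec, dotProduct, mul_comm]

theorem hasTemperateGrowth_pairing {d : ℕ} (θ : Matrix (Fin d) (Fin d) ℝ) :
    Function.HasTemperateGrowth fun p : Ed d × Ed d => pairing θ p.1 p.2 := by
  simp only [pairing_eq_inner]
  exact (innerSL ℝ).bilinear_hasTemperateGrowth (ContinuousLinearMap.fst ℝ _ _).hasTemperateGrowth
    ((Matrix.toEuclideanCLM (𝕜 := ℝ) θ : Ed d →L[ℝ] Ed d).comp
      (ContinuousLinearMap.snd ℝ (Ed d) (Ed d))).hasTemperateGrowth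

theorem Prod.norm_pow_le {E F : Type*} [SeminormedAddCommGroup E] [SeminormedAddCommGroup F]
    (x : E) (y : F) (k : ℕ) : ‖(x, y)‖ ^ k ≤ ‖x‖ ^ k + ‖y‖ ^ k := by
  rw [Prod.norm_mk]
  rcases max_choice ‖x‖ ‖y‖ with h | h <;> rw [h]
  · exact le_add_of_nonneg_right (by positivity)
  · exact le_add_of_nonneg_left (by positivity)

section Tensor

variable {E F G V₁ V₂ V₃ : Type*} [NormedAddCommGroup E] [NormedSpace ℝ E]
  [NormedAddCommGroup F] [NormedSpace ℝ F] [NormedAddCommGroup G] [NormedSpace ℝ G]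
  [NormedAddCommGroup V₁] [NormedSpace ℝ V₁] [NormedAddCommGroup V₂] [NormedSpace ℝ V₂]
  [NormedAddCommGroup V₃] [NormedSpace ℝ V₃]

theorem ContinuousLinearMap.norm_iteratedFDeriv_comp_right_le (L : G →L[ℝ] E) {f : E → V₁}
    (hf : ContDiff ℝ ∞ f) (x : G) (n : ℕ) :
    ‖iteratedFDeriv ℝ n (f ∘ L) x‖ ≤ ‖iteratedFDeriv ℝ n f (L x)‖ * ‖L‖ ^ n := by
  rw [L.iteratedFDeriv_comp_right hf x (mod_cast le_top)]
  simpa using ContinuousMultilinearMap.norm_compContinuousLinearMap_le _ fun _ : Fin n => L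

theorem norm_iteratedFDeriv_comp_fst_le {f : E → V₁} (hf : ContDiff ℝ ∞ f) (p : E × F) (n : ℕ) :
    ‖iteratedFDeriv ℝ n (fun q : E × F => f q.1) p‖ ≤ ‖iteratedFDeriv ℝ n f p.1‖ :=
  ((ContinuousLinearMap.fst ℝ E F).norm_iteratedFDeriv_comp_right_le hf p n).trans <|
    mul_le_of_le_one_right (norm_nonneg _) <|
      pow_le_one₀ (norm_nonneg _) (ContinuousLinearMap.norm_fst_le ℝ E F)

theorem norm_iteratedFDeriv_comp_snd_le {g : F → V₂} (hg : ContDiff ℝ ∞ g) (p : E × F) (n : ℕ) :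
    ‖iteratedFDeriv ℝ n (fun q : E × F => g q.2) p‖ ≤ ‖iteratedFDeriv ℝ n g p.2‖ :=
  ((ContinuousLinearMap.snd ℝ E F).norm_iteratedFDeriv_comp_right_le hg p n).trans <|
    mul_le_of_le_one_right (norm_nonneg _) <|
      pow_le_one₀ (norm_nonneg _) (ContinuousLinearMap.norm_snd_le ℝ E F)

theorem ContinuousLinearMap.norm_iteratedFDeriv_tensor_le (B : V₁ →L[ℝ] V₂ →L[ℝ] V₃)
    {f : E → V₁} {g : F → V₂} (hf : ContDiff ℝ ∞ f) (hg : ContDiff ℝ ∞ g) (p : E × F) (n : ℕ) :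
    ‖iteratedFDeriv ℝ n (fun q : E × F => B (f q.1) (g q.2)) p‖ ≤ ‖B‖ *
      ∑ j ∈ Finset.range (n + 1),
        n.choose j * ‖iteratedFDeriv ℝ j f p.1‖ * ‖iteratedFDeriv ℝ (n - j) g p.2‖ := by
  refine (B.norm_iteratedFDeriv_le_of_bilinear (hf.comp contDiff_fst) (hg.comp contDiff_snd) p
    (mod_cast le_top)).trans ?_
  gcongr with j
  · exact norm_iteratedFDeriv_comp_fst_le hf p j
  · exact norm_iteratedFDeriv_comp_snd_le hg p (n - j)

namespace SchwartzMap

def tensor (B : V₁ →L[ℝ] V₂ →L[ℝ] V₃) (f : 𝓢(E, V₁)) (g : 𝓢(F, V₂)) : 𝓢(E × F, V₃) where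
  toFun p := B (f p.1) (g p.2)
  smooth' := (B.contDiff.comp (f.smooth ⊤ |>.comp contDiff_fst)).clm_apply
    (g.smooth ⊤ |>.comp contDiff_snd)
  decay' k n := by
    refine ⟨‖B‖ * ∑ j ∈ Finset.range (n + 1), n.choose j *
      (SchwartzMap.seminorm ℝ k j f * SchwartzMap.seminorm ℝ 0 (n - j) g +
        SchwartzMap.seminorm ℝ 0 j f * SchwartzMap.seminorm ℝ k (n - j) g), fun p => ?_⟩
    calc ‖p‖ ^ k * ‖iteratedFDeriv ℝ n (fun q : E × F => B (f q.1) (g q.2)) p‖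
        ≤ (‖p.1‖ ^ k + ‖p.2‖ ^ k) * (‖B‖ * ∑ j ∈ Finset.range (n + 1), n.choose j *
            ‖iteratedFDeriv ℝ j f p.1‖ * ‖iteratedFDeriv ℝ (n - j) g p.2‖) := by
          gcongr
          · exact Prod.norm_pow_le p.1 p.2 k
          · exact B.norm_iteratedFDeriv_tensor_le (f.smooth ⊤) (g.smooth ⊤) p n
      _ = ‖B‖ * ∑ j ∈ Finset.range (n + 1), n.choose j *
            ((‖p.1‖ ^ k * ‖iteratedFDeriv ℝ j f p.1‖) * ‖iteratedFDeriv ℝ (n - j) g p.2‖ +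
              ‖iteratedFDeriv ℝ j f p.1‖ * (‖p.2‖ ^ k * ‖iteratedFDeriv ℝ (n - j) g p.2‖)) := by
          rw [mul_left_comm, Finset.mul_sum]
          congr 1
          exact Finset.sum_congr rfl fun j _ => by ring
      _ ≤ _ := by
          gcongr with j
          · exact le_seminorm ℝ k j f p.1
          · exact norm_iteratedFDeriv_le_seminorm ℝ g (n - j) p.2
          · exact norm_iteratedFDeriv_le_seminorm ℝ f j p.1
          · exact le_seminorm ℝ k (n - j) g p.2

@[simp]
theorem tensor_apply (B : V₁ →L[ℝ] V₂ →L[ℝ] V₃) (f : 𝓢(E, V₁)) (g : 𝓢(F, V₂)) (p : E × F) :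
    tensor B f g p = B (f p.1) (g p.2) := rfl

end SchwartzMap

end Tensor

def ContinuousLinearEquiv.shearSub (E : Type*) [NormedAddCommGroup E] [NormedSpace ℝ E] :
    (E × E) ≃L[ℝ] (E × E) :=
  .equivOfInverse
    ((ContinuousLinearMap.fst ℝ E E - .snd ℝ E E).prod (.snd ℝ E E))
    ((ContinuousLinearMap.fst ℝ E E + .snd ℝ E E).prod (.snd ℝ E E))
    (fun p => by simp) (fun p => by simp)

@[simp]
theorem ContinuousLinearEquiv.shearSub_apply {E : Type*} [NormedAddCommGroup E]
    [NormedSpace ℝ E] (p : E × E) : shearSub E p = (p.1 - p.2, p.2) := rfl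

universe u

namespace SchwartzMap

section Product

variable {E F V : Type*} [NormedAddCommGroup E] [NormedSpace ℝ E]
  [NormedAddCommGroup F] [NormedSpace ℝ F] [NormedAddCommGroup V] [NormedSpace ℝ V]

theorem norm_pow_mul_le_one_add_norm_snd_rpow_neg (K : 𝓢(E × F, V)) (k l : ℕ) :
    ∃ C, ∀ x y, ‖x‖ ^ k * ‖K (x, y)‖ ≤ C * (1 + ‖y‖) ^ (-(l : ℝ)) := by
  refine ⟨2 ^ l * (SchwartzMap.seminorm ℝ k 0 K + SchwartzMap.seminorm ℝ (k + l) 0 K),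
    fun x y => ?_⟩
  have hx : ‖x‖ ≤ ‖(x, y)‖ := norm_fst_le (x, y)
  have hy : ‖y‖ ≤ ‖(x, y)‖ := norm_snd_le (x, y)
  have h₁ : ‖x‖ ^ k * ‖K (x, y)‖ ≤ SchwartzMap.seminorm ℝ k 0 K :=
    (by gcongr : ‖x‖ ^ k * ‖K (x, y)‖ ≤ ‖(x, y)‖ ^ k * ‖K (x, y)‖).trans
      (norm_pow_mul_le_seminorm ℝ K k (x, y))
  have h₂ : ‖y‖ ^ (0 + l) * (‖x‖ ^ k * ‖K (x, y)‖) ≤ SchwartzMap.seminorm ℝ (k + l) 0 K := by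
    refine le_trans ?_ (norm_pow_mul_le_seminorm ℝ K (k + l) (x, y))
    rw [zero_add, pow_add, ← mul_assoc, mul_comm (‖y‖ ^ l)]
    gcongr
  simpa using pow_mul_le_of_le_of_pow_mul_le (norm_nonneg y) (by positivity) h₁ h₂

def fderivFst (K : 𝓢(E × F, V)) : 𝓢(E × F, E →L[ℝ] V) :=
  postcompCLM ((ContinuousLinearMap.compL ℝ E (E × F) V).flip (ContinuousLinearMap.inl ℝ E F))
    (fderivCLM ℝ (E × F) V K)

theorem fderivFst_apply (K : 𝓢(E × F, V)) (p : E × F) :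
    fderivFst K p = (fderiv ℝ K p).comp (ContinuousLinearMap.inl ℝ E F) := rfl

end Product

section PartialIntegral

/- `E` and `V` share a universe so that the inductions below can pass from `K` to its
`E →L[ℝ] V`-valued partial derivative `fderivFst K`. -/
variable {E : Type u} {F : Type*} {V : Type u} [NormedAddCommGroup E] [NormedSpace ℝ E]
  [NormedAddCommGroup F] [NormedSpace ℝ F] [MeasurableSpace F] [BorelSpace F]
  [SecondCountableTopology F] {μ : Measure F} [μ.HasTemperateGrowth]
  [NormedAddCommGroup V] [NormedSpace ℝ V]

theorem integrable_comp_prodMk_left (K : 𝓢(E × F, V)) (x : E) :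
    Integrable (fun y => K (x, y)) μ := by
  obtain ⟨C, hC⟩ := K.norm_pow_mul_le_one_add_norm_snd_rpow_neg 0 μ.integrablePower
  exact (μ.integrable_pow_neg_integrablePower.const_mul C).mono'
    (K.continuous.comp (Continuous.prodMk_right x)).aestronglyMeasurable
    (ae_of_all _ fun y => by simpa using hC x y)

theorem hasFDerivAt_integral_snd (K : 𝓢(E × F, V)) (x : E) :
    HasFDerivAt (fun x => ∫ y, K (x, y) ∂μ) (∫ y, fderivFst K (x, y) ∂μ) x := by
  obtain ⟨C, hC⟩ := (fderivFst K).norm_pow_mul_le_one_add_norm_snd_rpow_neg 0 μ.integrablePower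
  refine hasFDerivAt_integral_of_dominated_of_fderiv_le Filter.univ_mem
    (Eventually.of_forall fun x' => (integrable_comp_prodMk_left K x').aestronglyMeasurable)
    (integrable_comp_prodMk_left K x)
    (integrable_comp_prodMk_left (fderivFst K) x).aestronglyMeasurable
    (ae_of_all _ fun y x' _ => by simpa using hC x' y)
    (μ.integrable_pow_neg_integrablePower.const_mul C)
    (ae_of_all _ fun y x' _ => ?_)
  rw [fderivFst_apply]
  exact K.differentiableAt.hasFDerivAt.comp x' (hasFDerivAt_prodMk_left x' y)

theorem fderiv_integral_snd (K : 𝓢(E × F, V)) :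
    fderiv ℝ (fun x => ∫ y, K (x, y) ∂μ) = fun x => ∫ y, fderivFst K (x, y) ∂μ :=
  funext fun x => (hasFDerivAt_integral_snd K x).fderiv

theorem contDiff_integral_snd (n : ℕ) :
    ∀ {V : Type u} [NormedAddCommGroup V] [NormedSpace ℝ V] (K : 𝓢(E × F, V)),
      ContDiff ℝ n fun x => ∫ y, K (x, y) ∂μ := by
  induction n with
  | zero =>
    intro V _ _ K
    exact contDiff_zero.mpr
      (continuous_iff_continuousAt.mpr fun x => (hasFDerivAt_integral_snd K x).continuousAt)
  | succ n ih =>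
    intro V _ _ K
    rw [Nat.cast_succ, contDiff_succ_iff_fderiv]
    exact ⟨fun x => (hasFDerivAt_integral_snd K x).differentiableAt, by simp,
      fderiv_integral_snd (μ := μ) K ▸ ih (fderivFst K)⟩

theorem norm_pow_mul_iteratedFDeriv_integral_snd_le (n k : ℕ) :
    ∀ {V : Type u} [NormedAddCommGroup V] [NormedSpace ℝ V] (K : 𝓢(E × F, V)),
      ∃ C, ∀ x, ‖x‖ ^ k * ‖iteratedFDeriv ℝ n (fun x => ∫ y, K (x, y) ∂μ) x‖ ≤ C := by
  induction n with
  | zero =>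
    intro V _ _ K
    obtain ⟨C, hC⟩ := K.norm_pow_mul_le_one_add_norm_snd_rpow_neg k μ.integrablePower
    refine ⟨∫ y, C * (1 + ‖y‖) ^ (-(μ.integrablePower : ℝ)) ∂μ, fun x => ?_⟩
    rw [norm_iteratedFDeriv_zero]
    calc ‖x‖ ^ k * ‖∫ y, K (x, y) ∂μ‖ ≤ ‖x‖ ^ k * ∫ y, ‖K (x, y)‖ ∂μ := by
          gcongr
          exact norm_integral_le_integral_norm _
      _ = ∫ y, ‖x‖ ^ k * ‖K (x, y)‖ ∂μ := (integral_const_mul _ _).symm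
      _ ≤ _ := integral_mono ((integrable_comp_prodMk_left K x).norm.const_mul _)
          (μ.integrable_pow_neg_integrablePower.const_mul C) (hC x)
  | succ n ih =>
    intro V _ _ K
    obtain ⟨C, hC⟩ := ih (fderivFst K)
    exact ⟨C, fun x => by rw [← norm_iteratedFDeriv_fderiv, fderiv_integral_snd]; exact hC x⟩

variable (μ) in
def integralSnd (K : 𝓢(E × F, V)) : 𝓢(E, V) where
  toFun x := ∫ y, K (x, y) ∂μ
  smooth' := contDiff_infty.mpr fun n => contDiff_integral_snd n K
  decay' k n := norm_pow_mul_iteratedFDeriv_integral_snd_le n k K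

theorem integralSnd_apply (K : 𝓢(E × F, V)) (x : E) :
    integralSnd μ K x = ∫ y, K (x, y) ∂μ := rfl

end PartialIntegral

end SchwartzMap

theorem statement7_general (d : ℕ) (θ : Matrix (Fin d) (Fin d) ℝ)
    (f g : SchwartzMap (Ed d) ℂ) :
    ∃ h : SchwartzMap (Ed d) ℂ, ⇑h = twistedConv θ ⇑f ⇑g := by
  have hphase : Function.HasTemperateGrowth
      fun p : Ed d × Ed d => cexp ((2⁻¹ * pairing θ p.1 p.2 : ℝ) * I) :=
    hasTemperateGrowth_cexp_ofReal_mul_I.comp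
      ((Function.HasTemperateGrowth.const _).fun_mul (hasTemperateGrowth_pairing θ))
  let K : 𝓢(Ed d × Ed d, ℂ) := SchwartzMap.smulLeftCLM ℂ
    (fun p : Ed d × Ed d => cexp ((2⁻¹ * pairing θ p.1 p.2 : ℝ) * I))
    (SchwartzMap.compCLMOfContinuousLinearEquiv ℝ (ContinuousLinearEquiv.shearSub (Ed d))
      (SchwartzMap.tensor (ContinuousLinearMap.mul ℝ ℂ) f g))
  refine ⟨SchwartzMap.integralSnd volume K,
    funext fun s => integral_congr_ae (ae_of_all _ fun t => ?_)⟩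
  simp only [K, SchwartzMap.smulLeftCLM_apply_apply hphase,
    SchwartzMap.compCLMOfContinuousLinearEquiv_apply, Function.comp_apply,
    ContinuousLinearEquiv.shearSub_apply, SchwartzMap.tensor_apply, ContinuousLinearMap.mul_apply',
    smul_eq_mul]
  push_cast
  ring_nf

/-- The Schwartz space is closed under θ-twisted convolution: if `f, g` are Schwartz
functions on `ℝ^d`, then `f *_θ g` is again a Schwartz function. -/
theorem statement7 (d : ℕ) (hd : 0 < d) (θ : Matrix (Fin d) (Fin d) ℝ)
    (hθ : θ.transpose = -θ)
    (f g : SchwartzMap (Ed d) ℂ) :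
    ∃ h : SchwartzMap (Ed d) ℂ, ⇑h = twistedConv θ ⇑f ⇑g :=
  statement7_general d θ f g
end
end

section
/- Let f be a Schwartz function on ℝ^d and let x = U(f), which maps the Schwartz space S(ℝ^d) into itself. Let J be multiplication by (1 + |r|²)^{1/2} on L²(ℝ^d; ℂ), and define δ(T) = JT − TJ on S(ℝ^d), with iterates δ⁰(x) = x and δ^{k+1}(x) = δ(δ^k(x)). Then for every integer k ≥ 0, the operator δ^k(x), defined on S(ℝ^d), extends to a bounded operator on L²(ℝ^d; ℂ). -/
open MeasureTheory Complex Filter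

noncomputable section

/-- Multiplication by `(1 + |r|²)^{β/2}`, i.e. the Bessel potential power `J^β`,
acting on functions. -/
def Jpow {d : ℕ} (β : ℝ) (ξ : Ed d → ℂ) : Ed d → ℂ :=
  fun r => (((1 + ‖r‖ ^ 2) ^ (β / 2) : ℝ) : ℂ) * ξ r

/-- `L(T) = J⁻¹ (J² T − T J²)`, acting on operators on functions. -/
def Lop {d : ℕ} (A : (Ed d → ℂ) → (Ed d → ℂ)) : (Ed d → ℂ) → (Ed d → ℂ) :=
  fun ξ => Jpow (-1) (Jpow 2 (A ξ) - A (Jpow 2 ξ))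

/-- `δ(T) = J T − T J`, the commutator with `J`, acting on operators on functions. -/
def deltaOp {d : ℕ} (A : (Ed d → ℂ) → (Ed d → ℂ)) : (Ed d → ℂ) → (Ed d → ℂ) :=
  fun ξ => Jpow 1 (A ξ) - A (Jpow 1 ξ)

/-- The iterates `L^k(T)`. -/
def LIter {d : ℕ} (A : (Ed d → ℂ) → (Ed d → ℂ)) : ℕ → ((Ed d → ℂ) → (Ed d → ℂ))
  | 0 => A
  | k + 1 => Lop (LIter A k)

/-- The iterates `δ^k(T)`. -/
def deltaIter {d : ℕ} (A : (Ed d → ℂ) → (Ed d → ℂ)) : ℕ → ((Ed d → ℂ) → (Ed d → ℂ))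
  | 0 => A
  | k + 1 => deltaOp (deltaIter A k)

/-- A function on `ℝ^d` is Schwartz if it agrees with (the function underlying) an element
of the Schwartz space. -/
def IsSchwartzFun {d : ℕ} (ξ : Ed d → ℂ) : Prop :=
  ∃ g : SchwartzMap (Ed d) ℂ, ⇑g = ξ

/-- An operator, defined at the level of functions, has bounded extension to `L²` if it is
`L²`-bounded on the Schwartz space (which is dense in `L²`). -/
def HasBddExt {d : ℕ} (A : (Ed d → ℂ) → (Ed d → ℂ)) : Prop :=
  ∃ C : ℝ, ∀ ξ : SchwartzMap (Ed d) ℂ,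
    eLpNorm (A ⇑ξ) 2 volume ≤ ENNReal.ofReal C * eLpNorm (⇑ξ) 2 volume


/-- `U(f)` acting pointwise on functions: `(U(f)ξ)(s) = ∫ f(t) (U(t)ξ)(s) dt`. -/
def UfRaw {d : ℕ} (θ : Matrix (Fin d) (Fin d) ℝ) (f : Ed d → ℂ) :
    (Ed d → ℂ) → (Ed d → ℂ) :=
  fun ξ s => ∫ t : Ed d, f t * weyl θ t ξ s ∂volume

/-! Commuting `J` past the Weyl operator `U(t)` produces the factor `J(s) - J(s - t)`, so
`δ^k(U(f))` is the integral operator `ξ ↦ ∫ K_k(s, t) ξ(s - t) dt` with kernel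
`K_k(s, t) = f(t) exp(-(i/2)⟨t, θs⟩) (J(s) - J(s - t))^k`. As `J` is `1`-Lipschitz,
`|K_k(s, t)| ≤ |t|^k |f(t)|`, which is integrable, and Young's inequality
`‖h ⋆ ξ‖₂ ≤ ‖h‖₁ ‖ξ‖₂` bounds `δ^k(U(f))` on `L²`. -/

open scoped ENNReal

theorem ENNReal.lintegral_mul_sq_le {α : Type*} [MeasurableSpace α] {μ : Measure α}
    {H g : α → ℝ≥0∞} (hH : AEMeasurable H μ) (hg : AEMeasurable g μ) :
    (∫⁻ a, H a * g a ∂μ) ^ 2 ≤ (∫⁻ a, H a ∂μ) * ∫⁻ a, H a * g a ^ 2 ∂μ := by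
  have hsplit : ∀ a, H a * g a = H a ^ (2⁻¹ : ℝ) * (H a * g a ^ 2) ^ (2⁻¹ : ℝ) := fun a => by
    rw [ENNReal.mul_rpow_of_nonneg _ _ (by norm_num), ← mul_assoc,
      ← ENNReal.rpow_add_of_nonneg _ _ (by norm_num) (by norm_num), ← ENNReal.rpow_natCast,
      ← ENNReal.rpow_mul]
    norm_num
  have hCS := ENNReal.lintegral_mul_norm_pow_le hH (hH.mul (hg.pow_const 2))
    (by norm_num : (0 : ℝ) ≤ 2⁻¹) (by norm_num : (0 : ℝ) ≤ 2⁻¹) (by norm_num)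
  calc (∫⁻ a, H a * g a ∂μ) ^ 2
      ≤ ((∫⁻ a, H a ∂μ) ^ (2⁻¹ : ℝ) * (∫⁻ a, H a * g a ^ 2 ∂μ) ^ (2⁻¹ : ℝ)) ^ 2 := by
        simp only [hsplit]
        gcongr
        exact hCS
    _ = (∫⁻ a, H a ∂μ) * ∫⁻ a, H a * g a ^ 2 ∂μ := by
        rw [mul_pow, ← ENNReal.rpow_natCast, ← ENNReal.rpow_natCast (_ ^ _), ← ENNReal.rpow_mul,
          ← ENNReal.rpow_mul]
        norm_num

theorem lintegral_sq_lintegral_mul_sub_le {G : Type*} [MeasurableSpace G] [AddGroup G]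
    [MeasurableAdd₂ G] [MeasurableNeg G] {μ : Measure G} [SFinite μ] [μ.IsAddRightInvariant]
    {H g : G → ℝ≥0∞} (hH : Measurable H) (hg : Measurable g) :
    ∫⁻ s, (∫⁻ t, H t * g (s - t) ∂μ) ^ 2 ∂μ ≤ (∫⁻ t, H t ∂μ) ^ 2 * ∫⁻ u, g u ^ 2 ∂μ := by
  have hg_sub : Measurable fun p : G × G => g (p.1 - p.2) := hg.comp measurable_sub
  calc ∫⁻ s, (∫⁻ t, H t * g (s - t) ∂μ) ^ 2 ∂μ
      ≤ ∫⁻ s, (∫⁻ t, H t ∂μ) * ∫⁻ t, H t * g (s - t) ^ 2 ∂μ ∂μ :=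
        lintegral_mono fun s => ENNReal.lintegral_mul_sq_le hH.aemeasurable
          (hg_sub.comp (measurable_const.prodMk measurable_id)).aemeasurable
    _ = (∫⁻ t, H t ∂μ) * ∫⁻ t, ∫⁻ s, H t * g (s - t) ^ 2 ∂μ ∂μ := by
        rw [lintegral_const_mul _ ?_, lintegral_lintegral_swap]
        · exact ((hH.comp measurable_snd).mul (hg_sub.pow_const 2)).aemeasurable
        · exact (hH.comp measurable_snd).mul (hg_sub.pow_const 2) |>.lintegral_prod_right'
    _ = (∫⁻ t, H t ∂μ) ^ 2 * ∫⁻ u, g u ^ 2 ∂μ := by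
        have translate : ∀ t, ∫⁻ s, H t * g (s - t) ^ 2 ∂μ = H t * ∫⁻ u, g u ^ 2 ∂μ := fun t => by
          rw [lintegral_const_mul _ (by fun_prop : Measurable fun s => g (s - t) ^ 2),
            lintegral_sub_right_eq_self (fun u => g u ^ 2)]
        simp only [translate]
        rw [lintegral_mul_const _ hH, sq, mul_assoc]

theorem eLpNorm_two_sq_eq_lintegral {α E : Type*} [MeasurableSpace α] {μ : Measure α}
    [NormedAddCommGroup E] (F : α → E) :
    eLpNorm F 2 μ ^ 2 = ∫⁻ a, ‖F a‖ₑ ^ 2 ∂μ := by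
  simpa using eLpNorm_nnreal_pow_eq_lintegral (f := F) (μ := μ) (p := 2) two_ne_zero

theorem eLpNorm_two_le_of_enorm_le_lintegral_mul_sub {G E : Type*} [MeasurableSpace G]
    [AddGroup G] [MeasurableAdd₂ G] [MeasurableNeg G] {μ : Measure G} [SFinite μ]
    [μ.IsAddRightInvariant] [NormedAddCommGroup E] {H : G → ℝ≥0∞} {F ξ : G → E}
    (hH : Measurable H) (hξ : StronglyMeasurable ξ)
    (hF : ∀ s, ‖F s‖ₑ ≤ ∫⁻ t, H t * ‖ξ (s - t)‖ₑ ∂μ) :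
    eLpNorm F 2 μ ≤ (∫⁻ t, H t ∂μ) * eLpNorm ξ 2 μ := by
  refine (ENNReal.pow_le_pow_left_iff two_ne_zero).mp ?_
  rw [mul_pow, eLpNorm_two_sq_eq_lintegral, eLpNorm_two_sq_eq_lintegral]
  exact (lintegral_mono fun s => ENNReal.pow_le_pow_left (hF s)).trans
    (lintegral_sq_lintegral_mul_sub_le hH hξ.enorm)

def japaneseBracket {E : Type*} [Norm E] (x : E) : ℝ := √(1 + ‖x‖ ^ 2)

theorem norm_toLp_one_prod {E : Type*} [SeminormedAddCommGroup E] (x : E) :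
    ‖WithLp.toLp 2 ((1 : ℝ), x)‖ = japaneseBracket x := by
  rw [WithLp.prod_norm_eq_of_L2, japaneseBracket]
  simp

theorem abs_japaneseBracket_sub_le {E : Type*} [SeminormedAddCommGroup E] (x y : E) :
    |japaneseBracket x - japaneseBracket y| ≤ ‖x - y‖ := by
  have h := abs_norm_sub_norm_le (WithLp.toLp 2 ((1 : ℝ), x)) (WithLp.toLp 2 ((1 : ℝ), y))
  rw [norm_toLp_one_prod, norm_toLp_one_prod, ← WithLp.toLp_sub, Prod.mk_sub_mk, sub_self] at h
  simpa [WithLp.prod_norm_eq_of_L2] using h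

@[fun_prop]
theorem continuous_japaneseBracket {E : Type*} [SeminormedAddCommGroup E] :
    Continuous (japaneseBracket : E → ℝ) := by
  unfold japaneseBracket
  fun_prop

section Jpow

variable {d : ℕ}

theorem Jpow_zero (ξ : Ed d → ℂ) : Jpow 0 ξ = ξ := by
  funext r
  simp [Jpow]

theorem Jpow_one_apply (ξ : Ed d → ℂ) (r : Ed d) : Jpow 1 ξ r = japaneseBracket r * ξ r := by
  rw [Jpow, japaneseBracket, Real.sqrt_eq_rpow, one_div]

theorem Jpow_Jpow (a b : ℝ) (ξ : Ed d → ℂ) : Jpow a (Jpow b ξ) = Jpow (a + b) ξ := by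
  funext r
  simp only [Jpow]
  rw [add_div, Real.rpow_add (by positivity), Complex.ofReal_mul, mul_assoc]

theorem continuous_Jpow (β : ℝ) {ξ : Ed d → ℂ} (hξ : Continuous ξ) : Continuous (Jpow β ξ) := by
  have hweight : Continuous fun r : Ed d => (1 + ‖r‖ ^ 2) ^ (β / 2) :=
    (by fun_prop : Continuous fun r : Ed d => 1 + ‖r‖ ^ 2).rpow_const fun r => Or.inl (by positivity)
  unfold Jpow
  fun_prop

theorem norm_Jpow_natCast_le (m : ℕ) (g : SchwartzMap (Ed d) ℂ) (r : Ed d) :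
    ‖Jpow m g r‖ ≤ 2 ^ m * (Finset.Iic (m, 0)).sup (fun p => SchwartzMap.seminorm ℝ p.1 p.2) g := by
  have hweight : (1 + ‖r‖ ^ 2) ^ ((m : ℝ) / 2) ≤ (1 + ‖r‖) ^ m := by
    rw [show (m : ℝ) / 2 = 1 / 2 * m by ring, Real.rpow_mul (by positivity),
      ← Real.sqrt_eq_rpow, Real.rpow_natCast]
    exact pow_le_pow_left₀ (Real.sqrt_nonneg _) (sqrt_one_add_norm_sq_le r) m
  have hdecay := SchwartzMap.one_add_le_sup_seminorm_apply (𝕜 := ℝ) (m := (m, 0)) le_rfl le_rfl g r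
  rw [norm_iteratedFDeriv_zero] at hdecay
  rw [Jpow, norm_mul, Complex.norm_real, Real.norm_of_nonneg (by positivity)]
  exact (mul_le_mul_of_nonneg_right hweight (norm_nonneg _)).trans hdecay

end Jpow

section Kernel

variable {d : ℕ}

def weylCommKernel (θ : Matrix (Fin d) (Fin d) ℝ) (f : Ed d → ℂ) (k : ℕ) (s t : Ed d) : ℂ :=
  f t * Complex.exp (-(Complex.I / 2) * pairing θ t s) *
    (japaneseBracket s - japaneseBracket (s - t) : ℝ) ^ k

theorem norm_weylCommKernel_le (θ : Matrix (Fin d) (Fin d) ℝ) (f : Ed d → ℂ) (k : ℕ)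
    (s t : Ed d) : ‖weylCommKernel θ f k s t‖ ≤ ‖t‖ ^ k * ‖f t‖ := by
  have hphase : ‖Complex.exp (-(Complex.I / 2) * pairing θ t s)‖ = 1 := by
    simp [Complex.norm_exp]
  have hbracket : |japaneseBracket s - japaneseBracket (s - t)| ≤ ‖t‖ := by
    simpa using abs_japaneseBracket_sub_le s (s - t)
  rw [weylCommKernel, norm_mul, norm_mul, hphase, mul_one, norm_pow, Complex.norm_real,
    Real.norm_eq_abs, mul_comm]
  gcongr

theorem continuous_weylCommKernel (θ : Matrix (Fin d) (Fin d) ℝ) (f : SchwartzMap (Ed d) ℂ)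
    (k : ℕ) (s : Ed d) : Continuous (weylCommKernel θ f k s) := by
  unfold weylCommKernel pairing
  fun_prop

theorem integrable_weylCommKernel_mul (θ : Matrix (Fin d) (Fin d) ℝ) (f : SchwartzMap (Ed d) ℂ)
    (k : ℕ) (s : Ed d) {ξ : Ed d → ℂ} {M : ℝ} (hξ : Continuous ξ) (hM : ∀ r, ‖ξ r‖ ≤ M) :
    Integrable (fun t => weylCommKernel θ f k s t * ξ (s - t)) := by
  refine ((f.integrable_pow_mul volume k).mul_const M).mono'
    ((continuous_weylCommKernel θ f k s).mul (by fun_prop)).aestronglyMeasurable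
    (Eventually.of_forall fun t => ?_)
  rw [norm_mul]
  exact mul_le_mul (norm_weylCommKernel_le θ f k s t) (hM _) (norm_nonneg _) (by positivity)

-- The step `k → k + 1` evaluates `δ^k(U(f))` at `J ξ` as well as at `ξ`, so the induction runs
-- over all inputs `J^m g`.
theorem deltaIter_UfRaw_Jpow_apply (θ : Matrix (Fin d) (Fin d) ℝ) (f g : SchwartzMap (Ed d) ℂ)
    (k m : ℕ) (s : Ed d) :
    deltaIter (UfRaw θ f) k (Jpow m g) s = ∫ t, weylCommKernel θ f k s t * Jpow m g (s - t) := by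
  induction k generalizing m with
  | zero =>
    refine integral_congr_ae (Eventually.of_forall fun t => ?_)
    simp only [weyl, weylCommKernel, pow_zero, mul_one]
    ring
  | succ k ih =>
    have hJ : Jpow 1 (Jpow m g) = Jpow ((m + 1 : ℕ) : ℝ) g := by
      rw [Jpow_Jpow]
      push_cast
      ring_nf
    have hint (n : ℕ) := integrable_weylCommKernel_mul θ f k s (continuous_Jpow n g.continuous)
      (norm_Jpow_natCast_le n g)
    calc deltaIter (UfRaw θ f) (k + 1) (Jpow m g) s
        = japaneseBracket s * deltaIter (UfRaw θ f) k (Jpow m g) s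
          - deltaIter (UfRaw θ f) k (Jpow ((m + 1 : ℕ) : ℝ) g) s := by
          rw [← hJ]
          exact congrArg (· - _) (Jpow_one_apply _ s)
      _ = ∫ t, japaneseBracket s * (weylCommKernel θ f k s t * Jpow m g (s - t))
          - weylCommKernel θ f k s t * Jpow ((m + 1 : ℕ) : ℝ) g (s - t) := by
          rw [ih, ih, integral_sub ((hint m).const_mul _) (hint (m + 1)), integral_const_mul]
      _ = ∫ t, weylCommKernel θ f (k + 1) s t * Jpow m g (s - t) := by
          refine integral_congr_ae (Eventually.of_forall fun t => ?_)
          simp only [← hJ, Jpow_one_apply, weylCommKernel, pow_succ]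
          push_cast
          ring

end Kernel

theorem statement18_general (d : ℕ) (θ : Matrix (Fin d) (Fin d) ℝ) (f : SchwartzMap (Ed d) ℂ) :
    ∀ k : ℕ, HasBddExt (deltaIter (UfRaw θ ⇑f) k) := by
  intro k
  refine ⟨∫ t, ‖t‖ ^ k * ‖f t‖, fun ξ => ?_⟩
  rw [ofReal_integral_eq_lintegral_ofReal (f.integrable_pow_mul volume k)
    (Eventually.of_forall fun t => by positivity)]
  refine eLpNorm_two_le_of_enorm_le_lintegral_mul_sub (by fun_prop)
    ξ.continuous.stronglyMeasurable fun s => ?_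
  have hkernel := deltaIter_UfRaw_Jpow_apply θ f ξ k 0 s
  rw [Nat.cast_zero, Jpow_zero] at hkernel
  rw [hkernel]
  refine (enorm_integral_le_lintegral_enorm _).trans (lintegral_mono fun t => ?_)
  rw [enorm_mul, ← ofReal_norm]
  gcongr
  exact norm_weylCommKernel_le θ f k s t

/-- For `x = U(f)` with `f` Schwartz, every iterated commutator `δ^k(x)` with the Bessel
potential `J` (defined on the Schwartz space) extends to a bounded operator on `L²`. -/
theorem statement18 (d : ℕ) (hd : 0 < d) (θ : Matrix (Fin d) (Fin d) ℝ)
    (hθ : θ.transpose = -θ) (f : SchwartzMap (Ed d) ℂ) :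
    ∀ k : ℕ, HasBddExt (deltaIter (UfRaw θ ⇑f) k) :=
  statement18_general d θ f
end
end
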